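/- Let (X,d_X) and (I,d_I) be pseudo-distance spaces, let (A_t)_{t∈I} be a family of nonempty subsets of X, and let f : X → ℝ be Λ-Lipschitz continuous on (X,d_X) for some Λ > 0. Assume there exists α > 0 such that D_{H,X}(A_t,A_s) ≤ α·d_I(t,s) for all t,s ∈ I (inequality in [-∞,∞]), and that SUP_f(A_t) ∈ ℝ for all t ∈ I. Then the function φ*(t) := SUP_f(A_t) is αΛ-Lipschitz continuous on (I,d_I): |φ*(t) − φ*(s)| ≤ αΛ·d_I(t,s) for all t,s ∈ I, the inequality understood in [-∞,∞]. -/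

import Mathlib

/-- The distance from a point to a set, induced by an arbitrary
pseudo-distance `d : X → X → EReal`. -/
noncomputable def distSet {X : Type*} (d : X → X → EReal) (x : X) (A : Set X) : EReal :=
  ⨅ a ∈ A, d x a

/-- The asymmetric Hausdorff distance induced by `d`. -/
noncomputable def DasyH {X : Type*} (d : X → X → EReal) (A A' : Set X) : EReal :=
  ⨆ a ∈ A, distSet d a A'

/-- The (symmetric) Hausdorff distance induced by `d`. -/
noncomputable def DH {X : Type*} (d : X → X → EReal) (A A' : Set X) : EReal :=
  max (DasyH d A A') (DasyH d A' A)

/-- The supremum operator `SUP_f`. -/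
noncomputable def SUPf {X : Type*} (f : X → ℝ) (A : Set X) : EReal :=
  ⨆ a ∈ A, (f a : EReal)

/-!
For `a ∈ A t`, Lipschitz continuity gives `f a ≤ f b + Λ dX(a, b) ≤ SUP_f(A s) + Λ dX(a, b)` for
every `b ∈ A s`; taking the infimum over `b` and then the supremum over `a` yields
`SUP_f(A t) ≤ SUP_f(A s) + Λ D_asyH(A t, A s) ≤ SUP_f(A s) + αΛ dI(t, s)`. Exchanging `t` and `s`
bounds `|φ*(t) - φ*(s)|`. In `EReal` the infimum passes through `x ↦ q + Λ x` because, for real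
`q` and `Λ > 0`, this map is an order automorphism.
-/

namespace EReal

lemma coe_le_add_mul_iff {c q Λ : ℝ} (hΛ : 0 < Λ) (x : EReal) :
    (c : EReal) ≤ q + Λ * x ↔ (((c - q) / Λ : ℝ) : EReal) ≤ x := by
  induction x using EReal.rec with
  | bot => simp [coe_mul_bot_of_pos hΛ]
  | coe x =>
    rw [← coe_mul, ← coe_add, EReal.coe_le_coe_iff, EReal.coe_le_coe_iff, div_le_iff₀ hΛ]
    constructor <;> intro h <;> linarith
  | top => simp [coe_mul_top_of_pos hΛ]

lemma coe_le_add_mul_biInf {ι : Type*} {s : Set ι} {e : ι → EReal} {c q Λ : ℝ} (hΛ : 0 < Λ)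
    (h : ∀ i ∈ s, (c : EReal) ≤ q + Λ * e i) : (c : EReal) ≤ q + Λ * ⨅ i ∈ s, e i := by
  rw [coe_le_add_mul_iff hΛ]
  exact le_iInf₂ fun i hi => (coe_le_add_mul_iff hΛ _).1 (h i hi)

lemma coe_abs_sub_le_of_le_add {p q : ℝ} {c : EReal} (hpq : (p : EReal) ≤ q + c)
    (hqp : (q : EReal) ≤ p + c) : ((|p - q| : ℝ) : EReal) ≤ c := by
  induction c using EReal.rec with
  | bot => simp at hpq
  | coe c =>
    rw [← coe_add, EReal.coe_le_coe_iff] at hpq hqp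
    exact EReal.coe_le_coe_iff.2 (abs_sub_le_iff.2 ⟨by linarith, by linarith⟩)
  | top => exact le_top

end EReal

section Hausdorff

variable {X : Type*} {d : X → X → EReal} {f : X → ℝ} {Λ : ℝ}

lemma le_SUPf {A : Set X} {a : X} (ha : a ∈ A) : (f a : EReal) ≤ SUPf f A :=
  le_iSup₂ (f := fun a _ => (f a : EReal)) a ha

lemma distSet_le_DasyH {A : Set X} (B : Set X) {a : X} (ha : a ∈ A) :
    distSet d a B ≤ DasyH d A B :=
  le_iSup₂ (f := fun a _ => distSet d a B) a ha

lemma le_add_mul_distSet (hΛ : 0 < Λ)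
    (hf : ∀ x y : X, ((|f x - f y| : ℝ) : EReal) ≤ (Λ : EReal) * d x y)
    {B : Set X} {q : ℝ} (hq : SUPf f B ≤ q) (a : X) :
    (f a : EReal) ≤ q + Λ * distSet d a B := by
  refine EReal.coe_le_add_mul_biInf hΛ fun b hb => ?_
  have hfb : f b ≤ q := EReal.coe_le_coe_iff.1 ((le_SUPf hb).trans hq)
  calc (f a : EReal) ≤ ((q + |f a - f b| : ℝ) : EReal) :=
        EReal.coe_le_coe_iff.2 (by linarith [le_abs_self (f a - f b)])
    _ ≤ q + Λ * d a b := by rw [EReal.coe_add]; exact add_le_add_right (hf a b) _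

lemma SUPf_le_add_mul_DasyH (hΛ : 0 < Λ)
    (hf : ∀ x y : X, ((|f x - f y| : ℝ) : EReal) ≤ (Λ : EReal) * d x y)
    {A B : Set X} {q : ℝ} (hq : SUPf f B = q) :
    SUPf f A ≤ q + Λ * DasyH d A B :=
  iSup₂_le fun a ha => (le_add_mul_distSet hΛ hf hq.le a).trans <| add_le_add_right
    (mul_le_mul_of_nonneg_left (distSet_le_DasyH B ha) (EReal.coe_nonneg.2 hΛ.le)) _

end Hausdorff

theorem optimal_value_sup_lipschitz_general {X : Type*} {I : Type*}
    (dX : X → X → EReal) (dI : I → I → EReal)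
    (A : I → Set X)
    (f : X → ℝ) (Λ : ℝ) (hΛ : 0 < Λ)
    (hf : ∀ x y : X, ((|f x - f y| : ℝ) : EReal) ≤ (Λ : EReal) * dX x y)
    (α : ℝ)
    (hH : ∀ t s : I, DH dX (A t) (A s) ≤ (α : EReal) * dI t s)
    (hfin : ∀ t : I, ∃ r : ℝ, SUPf f (A t) = (r : EReal)) :
    ∀ t s : I,
      ((|(SUPf f (A t)).toReal - (SUPf f (A s)).toReal| : ℝ) : EReal)
        ≤ ((α * Λ : ℝ) : EReal) * dI t s := by
  intro t s
  obtain ⟨p, hp⟩ := hfin t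
  obtain ⟨q, hq⟩ := hfin s
  have hscale : ∀ {D : EReal}, D ≤ DH dX (A t) (A s) →
      (Λ : EReal) * D ≤ ((α * Λ : ℝ) : EReal) * dI t s := fun hD => by
    rw [mul_comm α, EReal.coe_mul, mul_assoc]
    exact mul_le_mul_of_nonneg_left (hD.trans (hH t s)) (EReal.coe_nonneg.2 hΛ.le)
  rw [hp, hq, EReal.toReal_coe, EReal.toReal_coe]
  refine EReal.coe_abs_sub_le_of_le_add ?_ ?_
  · exact hp ▸ (SUPf_le_add_mul_DasyH hΛ hf hq).trans
      (add_le_add_right (hscale (le_max_left _ _)) _)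
  · exact hq ▸ (SUPf_le_add_mul_DasyH hΛ hf hp).trans
      (add_le_add_right (hscale (le_max_right _ _)) _)

/-- **Lipschitz continuity of the optimal value function.**
If `f` is `Λ`-Lipschitz continuous on `(X, dX)`, `D_{H,X}(A t, A s) ≤ α · dI t s` for
all `t, s ∈ I` and `SUP_f(A t) ∈ ℝ` for all `t`, then `φ*(t) := SUP_f(A t)` is
`αΛ`-Lipschitz continuous on `(I, dI)`. -/
theorem optimal_value_sup_lipschitz {X : Type*} {I : Type*} [Nonempty X] [Nonempty I]
    (dX : X → X → EReal) (dI : I → I → EReal)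
    (A : I → Set X) (hA : ∀ t, (A t).Nonempty)
    (f : X → ℝ) (Λ : ℝ) (hΛ : 0 < Λ)
    (hf : ∀ x y : X, ((|f x - f y| : ℝ) : EReal) ≤ (Λ : EReal) * dX x y)
    (α : ℝ) (hα : 0 < α)
    (hH : ∀ t s : I, DH dX (A t) (A s) ≤ (α : EReal) * dI t s)
    (hfin : ∀ t : I, ∃ r : ℝ, SUPf f (A t) = (r : EReal)) :
    ∀ t s : I,
      ((|(SUPf f (A t)).toReal - (SUPf f (A s)).toReal| : ℝ) : EReal)
        ≤ ((α * Λ : ℝ) : EReal) * dI t s :=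
  optimal_value_sup_lipschitz_general dX dI A f Λ hΛ hf α hH hfin
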